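/- (Growth bound for regularized policy iterates.) Under the regularized policy gradient update $p^{t+1}=\arg\min_{p\in\Delta(\mathcal{Y})}[-\langle l^t,p\rangle+\lambda\chi^2(p,\nu)+\tfrac1\eta D(p,p^t)]$ with losses $l^t\in[0,1]^{\mathcal{Y}}$ and initialization $p^1=\nu$, the iterates satisfy $\chi^2(p^t,\nu)\le (t-1)/\lambda$ for all $t\ge 1$. -/

import Mathlib

/-! Comparing the minimizer `pᵗ⁺¹` with the feasible competitor `pᵗ`, whose proximal term
`D(pᵗ, pᵗ)` vanishes, shows that one step raises `λ χ²(·, ν)` by at most the linear gain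
`⟨lᵗ, pᵗ⁺¹ - pᵗ⟩ ≤ 1`. Starting from `χ²(p¹, ν) = 0`, induction on `t` gives the bound. -/

open Finset

section

variable {Y : Type*} [Fintype Y]

/-- `weightedSqDist ν p ν` is `χ²(p, ν)`; `weightedSqDist ν p q` is the proximal term `D(p, q)`. -/
noncomputable def weightedSqDist (ν p q : Y → ℝ) : ℝ :=
  ∑ y, (p y - q y) ^ 2 / ν y

@[simp]
lemma weightedSqDist_self (ν p : Y → ℝ) : weightedSqDist ν p p = 0 := by
  simp [weightedSqDist]

lemma weightedSqDist_nonneg {ν : Y → ℝ} (hν : ∀ y, 0 ≤ ν y) (p q : Y → ℝ) :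
    0 ≤ weightedSqDist ν p q :=
  sum_nonneg fun y _ => div_nonneg (sq_nonneg _) (hν y)

/-- The objective minimized by `pᵗ⁺¹`, for `p₀ = pᵗ` and `l = lᵗ`. -/
noncomputable def regObjective (ν l : Y → ℝ) (lam η : ℝ) (p₀ q : Y → ℝ) : ℝ :=
  (-∑ y, l y * q y) + lam * weightedSqDist ν q ν + (1 / η) * weightedSqDist ν q p₀

lemma sum_mul_sub_sum_mul_le_one {l p q : Y → ℝ} (hl : ∀ y, 0 ≤ l y ∧ l y ≤ 1)
    (hp : ∀ y, 0 ≤ p y) (hq : q ∈ stdSimplex ℝ Y) :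
    ∑ y, l y * q y - ∑ y, l y * p y ≤ 1 := by
  have hlq : ∑ y, l y * q y ≤ 1 :=
    calc ∑ y, l y * q y ≤ ∑ y, q y :=
          sum_le_sum fun y _ => mul_le_of_le_one_left (hq.1 y) (hl y).2
      _ = 1 := hq.2
  have hlp : 0 ≤ ∑ y, l y * p y := sum_nonneg fun y _ => mul_nonneg (hl y).1 (hp y)
  linarith

lemma mul_weightedSqDist_le_of_regObjective_le {ν l p q : Y → ℝ} {lam η : ℝ}
    (hν : ∀ y, 0 ≤ ν y) (hη : 0 < η) (hgain : ∑ y, l y * q y - ∑ y, l y * p y ≤ 1)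
    (hmin : regObjective ν l lam η p q ≤ regObjective ν l lam η p p) :
    lam * weightedSqDist ν q ν ≤ lam * weightedSqDist ν p ν + 1 := by
  have hprox : 0 ≤ (1 / η) * weightedSqDist ν q p :=
    mul_nonneg (by positivity) (weightedSqDist_nonneg hν q p)
  simp only [regObjective, weightedSqDist_self, mul_zero, add_zero] at hmin
  linarith

lemma weightedSqDist_le_add_of_regObjective_le {ν l p q : Y → ℝ} {lam η : ℝ}
    (hν : ∀ y, 0 < ν y) (hη : 0 < η) (hlam : 0 < lam) (hl : ∀ y, 0 ≤ l y ∧ l y ≤ 1)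
    (hp : p ∈ stdSimplex ℝ Y) (hq : q ∈ stdSimplex ℝ Y)
    (hmin : regObjective ν l lam η p q ≤ regObjective ν l lam η p p) :
    weightedSqDist ν q ν ≤ weightedSqDist ν p ν + 1 / lam := by
  have h := mul_weightedSqDist_le_of_regObjective_le (fun y => (hν y).le) hη
    (sum_mul_sub_sum_mul_le_one hl hp.1 hq) hmin
  rwa [← mul_le_mul_iff_of_pos_left hlam, mul_add, mul_one_div_cancel hlam.ne']

end

theorem chiSq_growth_bound_regularized_iterates_general
    {Y : Type*} [Fintype Y]
    (ν : Y → ℝ) (hν : ∀ y, 0 < ν y)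
    (T : ℕ) (η lam : ℝ) (hη : 0 < η) (hlam : 0 < lam)
    (l : ℕ → Y → ℝ) (hl : ∀ t ∈ Finset.Icc 1 T, ∀ y, 0 ≤ l t y ∧ l t y ≤ 1)
    (p : ℕ → Y → ℝ)
    (hp1 : p 1 = ν)
    (hsimplex : ∀ t ∈ Finset.Icc 1 (T + 1), (∀ y, 0 ≤ p t y) ∧ ∑ y, p t y = 1)
    (hupdate : ∀ t ∈ Finset.Icc 1 T, ∀ q : Y → ℝ, (∀ y, 0 ≤ q y) → (∑ y, q y = 1) →
      (-∑ y, l t y * p (t + 1) y) + lam * ∑ y, (p (t + 1) y - ν y) ^ 2 / ν y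
          + (1 / η) * ∑ y, (p (t + 1) y - p t y) ^ 2 / ν y
        ≤ (-∑ y, l t y * q y) + lam * ∑ y, (q y - ν y) ^ 2 / ν y
          + (1 / η) * ∑ y, (q y - p t y) ^ 2 / ν y) :
    ∀ t ∈ Finset.Icc 1 (T + 1),
      ∑ y, (p t y - ν y) ^ 2 / ν y ≤ ((t : ℝ) - 1) / lam := by
  intro t ht
  obtain ⟨ht1, htT⟩ := mem_Icc.mp ht
  induction t, ht1 using Nat.le_induction with
  | base => simp [hp1]
  | succ n hn ih =>
    have hnT : n ∈ Finset.Icc 1 T := mem_Icc.mpr ⟨hn, by omega⟩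
    have hpn := hsimplex n (mem_Icc.mpr ⟨hn, by omega⟩)
    have hstep : weightedSqDist ν (p (n + 1)) ν ≤ weightedSqDist ν (p n) ν + 1 / lam :=
      weightedSqDist_le_add_of_regObjective_le hν hη hlam (hl n hnT) hpn
        (hsimplex (n + 1) ht) (hupdate n hnT (p n) hpn.1 hpn.2)
    have hchi : weightedSqDist ν (p n) ν ≤ ((n : ℝ) - 1) / lam :=
      ih (mem_Icc.mpr ⟨hn, by omega⟩) (by omega)
    calc weightedSqDist ν (p (n + 1)) ν ≤ ((n : ℝ) - 1) / lam + 1 / lam := by linarith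
      _ = ((n + 1 : ℕ) - 1 : ℝ) / lam := by push_cast; ring

/-- Growth bound for regularized policy iterates: under the chi-squared–regularized
policy-gradient update with losses in `[0,1]` and `p¹ = ν`, the iterates satisfy
`χ²(pᵗ, ν) ≤ (t-1)/λ`. -/
theorem chiSq_growth_bound_regularized_iterates
    {Y : Type*} [Fintype Y]
    (ν : Y → ℝ) (hν : ∀ y, 0 < ν y) (hνsum : ∑ y, ν y = 1)
    (T : ℕ) (η lam : ℝ) (hη : 0 < η) (hlam : 0 < lam)
    (l : ℕ → Y → ℝ) (hl : ∀ t ∈ Finset.Icc 1 T, ∀ y, 0 ≤ l t y ∧ l t y ≤ 1)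
    (p : ℕ → Y → ℝ)
    (hp1 : p 1 = ν)
    (hsimplex : ∀ t ∈ Finset.Icc 1 (T + 1), (∀ y, 0 ≤ p t y) ∧ ∑ y, p t y = 1)
    (hupdate : ∀ t ∈ Finset.Icc 1 T, ∀ q : Y → ℝ, (∀ y, 0 ≤ q y) → (∑ y, q y = 1) →
      (-∑ y, l t y * p (t + 1) y) + lam * ∑ y, (p (t + 1) y - ν y) ^ 2 / ν y
          + (1 / η) * ∑ y, (p (t + 1) y - p t y) ^ 2 / ν y
        ≤ (-∑ y, l t y * q y) + lam * ∑ y, (q y - ν y) ^ 2 / ν y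
          + (1 / η) * ∑ y, (q y - p t y) ^ 2 / ν y) :
    ∀ t ∈ Finset.Icc 1 (T + 1),
      ∑ y, (p t y - ν y) ^ 2 / ν y ≤ ((t : ℝ) - 1) / lam :=
  chiSq_growth_bound_regularized_iterates_general ν hν T η lam hη hlam l hl p hp1 hsimplex hupdate
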